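/- Let χ : H → kˣ be a character with χ ≠ χ^s. Then the space of U-invariants (Ind_B^Γ χ^s)^U is two-dimensional over k, and every nonzero k[Γ]-submodule of Ind_B^Γ χ^s contains Im(T_{n_s} : Ind_B^Γ χ → Ind_B^Γ χ^s); in particular Ind_B^Γ χ^s is an indecomposable k[Γ]-module and Im(T_{n_s}) is its unique minimal nonzero submodule. -/

import Mathlib

/-!
By the Bruhat decomposition `GL₂ = B ⊔ B nₛ U`, a function in `Ind ξ` is determined by its
values at `1` and at the `nₛ u_μ`. Hence the `U`-invariants of `Ind ξ` are spanned by the two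
functions supported on the cells `B` and `B nₛ U`, on which the diagonal torus acts through `ξ`
and `ξ^s`; the first one generates `Ind ξ`, and `T_{nₛ}` sends the `B`-cell function of `Ind χ`
to the big-cell function of `Ind χ^s`, so the latter generates `Im T_{nₛ}`.
A nonzero `Γ`-stable `N ≤ Ind χ^s` has a nonzero `U`-fixed vector, since `U` is a `p`-group
acting in characteristic `p`. When `χ ≠ χ^s` a torus element separates the two components of that
vector, so `N` contains one of the cell functions, and in either case the big-cell one.
-/

open Matrix

noncomputable section

abbrev GL2 (F : Type) [Field F] := Matrix.GeneralLinearGroup (Fin 2) F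

variable (F : Type) [Field F] [Fintype F] (k : Type) [Field k]

/-- The unipotent upper-triangular matrix `[[1, c], [0, 1]]`. -/
def uElt (c : F) : GL2 F :=
  Matrix.GeneralLinearGroup.mkOfDetNeZero !![1, c; 0, 1] (by simp [Matrix.det_fin_two_of])

/-- The upper-triangular matrix `[[a, c], [0, d]]`. -/
def bElt (a d : Fˣ) (c : F) : GL2 F :=
  Matrix.GeneralLinearGroup.mkOfDetNeZero !![(a : F), c; 0, (d : F)]
    (by simp [Matrix.det_fin_two_of])

/-- The diagonal matrix `[[a, 0], [0, d]]`. -/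
def hElt (a d : Fˣ) : GL2 F := bElt F a d 0

/-- The matrix `n_s = [[0, -1], [1, 0]]`. -/
def nsElt : GL2 F :=
  Matrix.GeneralLinearGroup.mkOfDetNeZero !![0, -1; 1, 0] (by norm_num [Matrix.det_fin_two_of])

/-- The right-translation representation of `GL₂(F)` on the space of `k`-valued functions. -/
def rt : Representation k (GL2 F) (GL2 F → k) where
  toFun g :=
    { toFun := fun f x => f (x * g)
      map_add' := fun _ _ => rfl
      map_smul' := fun _ _ => rfl }
  map_one' := by ext f x; simp
  map_mul' g g' := by ext f x; simp [mul_assoc]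

/-- `χ^s`, the character obtained from `χ` by swapping the two diagonal entries. -/
def swapChar (χ : (Fˣ × Fˣ) →* kˣ) : (Fˣ × Fˣ) →* kˣ where
  toFun x := χ (x.2, x.1)
  map_one' := by simp; exact χ.map_one
  map_mul' x y := by rw [← _root_.map_mul]; rfl

/-- The induced representation `Ind_B^Γ χ` as a subspace of the space of functions `Γ → k`:
functions satisfying `f (b * g) = χ (b) * f g` for all upper-triangular `b`. -/
def Ind (χ : (Fˣ × Fˣ) →* kˣ) : Submodule k (GL2 F → k) where
  carrier := {f | ∀ (a d : Fˣ) (c : F) (g : GL2 F), f (bElt F a d c * g) = (χ (a, d) : k) * f g}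
  add_mem' := by
    intro f1 f2 h1 h2 a d c g
    simp only [Pi.add_apply, h1 a d c g, h2 a d c g]
    ring
  zero_mem' := by intro a d c g; simp
  smul_mem' := by
    intro t f hf a d c g
    simp only [Pi.smul_apply, smul_eq_mul, hf a d c g]
    ring

/-- The Hecke operator `T_{n_s}`, `(T f) x = ∑_{c ∈ F} f (n_s⁻¹ * u_c * x)`. -/
def heckeT : (GL2 F → k) →ₗ[k] (GL2 F → k) where
  toFun f x := ∑ c : F, f ((nsElt F)⁻¹ * uElt F c * x)
  map_add' f g := by funext x; simp [Finset.sum_add_distrib]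
  map_smul' t f := by funext x; simp [Finset.mul_sum]

/-- The submodule of invariants of a representation under a set of group elements. -/
def invSubmodule {G V : Type*} [Group G] [AddCommGroup V] [Module k V]
    (ρ : Representation k G V) (S : Set G) : Submodule k V where
  carrier := {v | ∀ g ∈ S, ρ g v = v}
  add_mem' := by intro v w hv hw g hg; rw [map_add, hv g hg, hw g hg]
  zero_mem' := by intro g hg; rw [map_zero]
  smul_mem' := by intro c v hv g hg; rw [LinearMap.map_smul, hv g hg]

section LinearAlgebra

variable {K V : Type*} [Field K] [AddCommGroup V] [Module K V]

theorem isNilpotent_sub_one_of_pow_eq_one {R : Type*} [Ring R] (p : ℕ) [Fact p.Prime] [CharP R p]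
    {a : R} (h : a ^ p = 1) : IsNilpotent (a - 1) :=
  ⟨p, by rw [sub_pow_char_of_commute p (Commute.one_right a), h, one_pow, sub_self]⟩

theorem Submodule.exists_mem_ne_zero_apply_eq_zero_of_isNilpotent {D : Module.End K V}
    (hD : IsNilpotent D) {N : Submodule K V} (hN : ∀ v ∈ N, D v ∈ N) (hne : N ≠ ⊥) :
    ∃ v ∈ N, v ≠ 0 ∧ D v = 0 := by
  obtain ⟨m, hm⟩ := hD
  obtain ⟨v, hvN, hv⟩ := Submodule.exists_mem_ne_zero_of_ne_bot hne
  replace hm : (D ^ m) v = 0 := by rw [hm, LinearMap.zero_apply]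
  induction m generalizing v with
  | zero => exact absurd hm hv
  | succ m ih =>
    by_cases hDv : D v = 0
    · exact ⟨v, hvN, hv, hDv⟩
    · exact ih (D v) (hN v hvN) hDv (by rwa [← Module.End.mul_apply, ← pow_succ])

theorem Submodule.exists_mem_ne_zero_forall_apply_eq_zero_of_isNilpotent {ι : Type*} [Finite ι]
    {D : ι → Module.End K V} (hD : ∀ i, IsNilpotent (D i)) (hcomm : ∀ i j, Commute (D i) (D j))
    {N : Submodule K V} (hN : ∀ i, ∀ v ∈ N, D i v ∈ N) (hne : N ≠ ⊥) :
    ∃ v ∈ N, v ≠ 0 ∧ ∀ i, D i v = 0 := by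
  classical
  have := Fintype.ofFinite ι
  suffices h : ∀ s : Finset ι, ∀ N : Submodule K V, (∀ i, ∀ v ∈ N, D i v ∈ N) → N ≠ ⊥ →
      ∃ v ∈ N, v ≠ 0 ∧ ∀ i ∈ s, D i v = 0 by
    simpa using h Finset.univ N hN hne
  intro s
  induction s using Finset.induction_on with
  | empty => exact fun N _ hne => by simpa using Submodule.exists_mem_ne_zero_of_ne_bot hne
  | insert j s _ ih =>
    intro N hN hne
    -- the kernel of `D j` in `N` is nonzero and, by commutativity, stable under every `D i`
    obtain ⟨w, hwN, hw, hDw⟩ :=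
      exists_mem_ne_zero_apply_eq_zero_of_isNilpotent (hD j) (hN j) hne
    have hN' : ∀ i, ∀ v ∈ N ⊓ LinearMap.ker (D j), D i v ∈ N ⊓ LinearMap.ker (D j) := by
      intro i v hv
      obtain ⟨hvN, hvj⟩ := Submodule.mem_inf.1 hv
      refine Submodule.mem_inf.2 ⟨hN i v hvN, ?_⟩
      rw [LinearMap.mem_ker] at hvj ⊢
      rw [← Module.End.mul_apply, (hcomm j i).eq, Module.End.mul_apply, hvj, map_zero]
    obtain ⟨v, hv', hv, hvs⟩ :=
      ih _ hN' (Submodule.ne_bot_iff _ |>.2 ⟨w, Submodule.mem_inf.2 ⟨hwN, hDw⟩, hw⟩)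
    obtain ⟨hvN, hvj⟩ := Submodule.mem_inf.1 hv'
    exact ⟨v, hvN, hv, Finset.forall_mem_insert _ _ _ |>.2 ⟨hvj, hvs⟩⟩

theorem Submodule.mem_of_add_mem_of_apply_eq_smul {N : Submodule K V} {A : Module.End K V}
    (hA : ∀ v ∈ N, A v ∈ N) {v w : V} {α β : K} (hv : A v = α • v) (hw : A w = β • w)
    (hαβ : α ≠ β) (hvw : v + w ∈ N) : v ∈ N := by
  have h : (α - β) • v = A (v + w) - β • (v + w) := by
    rw [map_add, hv, hw]
    module
  exact (N.smul_mem_iff (sub_ne_zero.2 hαβ)).1 (h ▸ N.sub_mem (hA _ hvw) (N.smul_mem β hvw))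

end LinearAlgebra

section GL2
omit [Fintype F]
variable {F}

local notation "M2" => Matrix (Fin 2) (Fin 2) F

@[simp] lemma coe_uElt (c : F) : ((uElt F c : GL2 F) : M2) = !![1, c; 0, 1] := rfl
@[simp] lemma coe_bElt (a d : Fˣ) (c : F) :
    ((bElt F a d c : GL2 F) : M2) = !![(a : F), c; 0, (d : F)] := rfl
@[simp] lemma coe_nsElt : ((nsElt F : GL2 F) : M2) = !![0, -1; 1, 0] := rfl

lemma GL2.mul_apply (x y : GL2 F) (i j : Fin 2) :
    ((x * y : GL2 F) : M2) i j = (x : M2) i 0 * (y : M2) 0 j + (x : M2) i 1 * (y : M2) 1 j := by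
  rw [Matrix.GeneralLinearGroup.coe_mul, Matrix.mul_apply, Fin.sum_univ_two]

lemma uElt_add (a b : F) : uElt F (a + b) = uElt F a * uElt F b := by
  ext i j; fin_cases i <;> fin_cases j <;> simp [GL2.mul_apply, add_comm]

@[simp] lemma uElt_zero : uElt F 0 = 1 := by
  ext i j; fin_cases i <;> fin_cases j <;> simp

lemma uElt_nsmul (m : ℕ) (c : F) : uElt F (m • c) = uElt F c ^ m := by
  induction m with
  | zero => simp
  | succ m ih => rw [succ_nsmul, uElt_add, ih, pow_succ]

lemma uElt_inv (c : F) : (uElt F c)⁻¹ = uElt F (-c) := by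
  rw [eq_comm, eq_inv_iff_mul_eq_one, ← uElt_add, neg_add_cancel, uElt_zero]

lemma nsElt_inv : (nsElt F)⁻¹ = bElt F (-1) (-1) 0 * nsElt F := by
  rw [inv_eq_iff_mul_eq_one]
  ext i j; fin_cases i <;> fin_cases j <;> simp [GL2.mul_apply]

lemma inv_nsElt_mul_uElt_mul_bElt (a d : Fˣ) (c l : F) :
    (nsElt F)⁻¹ * uElt F l * bElt F a d c =
      hElt F d a * ((nsElt F)⁻¹ * uElt F ((c + l * d) / a)) := by
  ext i j
  fin_cases i <;> fin_cases j <;> simp [GL2.mul_apply, nsElt_inv, hElt]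
  field_simp
  ring

lemma exists_eq_bElt {g : GL2 F} (h : (g : M2) 1 0 = 0) : ∃ a d c, g = bElt F a d c := by
  have hdet : (g : M2).det = (g : M2) 0 0 * (g : M2) 1 1 := by simp [Matrix.det_fin_two, h]
  have h00 : (g : M2) 0 0 ≠ 0 := fun h0 => g.det_ne_zero (by simp [hdet, h0])
  have h11 : (g : M2) 1 1 ≠ 0 := fun h0 => g.det_ne_zero (by simp [hdet, h0])
  refine ⟨Units.mk0 _ h00, Units.mk0 _ h11, (g : M2) 0 1, ?_⟩
  ext i j; fin_cases i <;> fin_cases j <;> simp [h]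

lemma exists_eq_bElt_mul_nsElt_mul_uElt {g : GL2 F} (h : (g : M2) 1 0 ≠ 0) :
    ∃ a d c μ, g = bElt F a d c * (nsElt F * uElt F μ) := by
  refine ⟨Units.mk0 _ (div_ne_zero g.det_ne_zero h), Units.mk0 _ h, (g : M2) 0 0,
    (g : M2) 1 1 / (g : M2) 1 0, ?_⟩
  ext i j; fin_cases i <;> fin_cases j <;> simp [GL2.mul_apply, Matrix.det_fin_two]
  · field_simp; ring
  · field_simp

end GL2

section Induced
omit [Fintype F]
variable {F k}

local notation "M2" => Matrix (Fin 2) (Fin 2) F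

@[simp] lemma rt_apply (g : GL2 F) (f : GL2 F → k) (x : GL2 F) : rt F k g f x = f (x * g) := rfl

lemma rt_mem_Ind {ξ : (Fˣ × Fˣ) →* kˣ} (g : GL2 F) {f : GL2 F → k} (hf : f ∈ Ind F k ξ) :
    rt F k g f ∈ Ind F k ξ := fun a d c y => by
  simpa only [rt_apply, mul_assoc] using hf a d c (y * g)

lemma Ind_ext {ξ : (Fˣ × Fˣ) →* kˣ} {f f' : GL2 F → k} (hf : f ∈ Ind F k ξ)
    (hf' : f' ∈ Ind F k ξ) (h1 : f 1 = f' 1)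
    (hns : ∀ μ, f (nsElt F * uElt F μ) = f' (nsElt F * uElt F μ)) : f = f' := by
  funext x
  by_cases hx : (x : M2) 1 0 = 0
  · obtain ⟨a, d, c, rfl⟩ := exists_eq_bElt hx
    rw [← mul_one (bElt F a d c), hf, hf', h1]
  · obtain ⟨a, d, c, μ, rfl⟩ := exists_eq_bElt_mul_nsElt_mul_uElt hx
    rw [hf, hf', hns]

lemma swapChar_swapChar (χ : (Fˣ × Fˣ) →* kˣ) : swapChar F k (swapChar F k χ) = χ := rfl

open scoped Classical in
def charExt (χ : (Fˣ × Fˣ) →* kˣ) (a d : F) : k :=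
  if h : a ≠ 0 ∧ d ≠ 0 then χ (Units.mk0 a h.1, Units.mk0 d h.2) else 0

@[simp] lemma charExt_units (χ : (Fˣ × Fˣ) →* kˣ) (a d : Fˣ) :
    charExt χ (a : F) (d : F) = χ (a, d) := by
  simp [charExt]

@[simp] lemma charExt_one (χ : (Fˣ × Fˣ) →* kˣ) : charExt χ (1 : F) 1 = 1 := by
  simpa [Prod.mk_one_one] using charExt_units χ 1 1

lemma charExt_mul (χ : (Fˣ × Fˣ) →* kˣ) {a a' d d' : F} (ha : a ≠ 0) (ha' : a' ≠ 0) (hd : d ≠ 0)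
    (hd' : d' ≠ 0) : charExt χ (a * a') (d * d') = charExt χ a d * charExt χ a' d' := by
  lift a to Fˣ using ha.isUnit
  lift a' to Fˣ using ha'.isUnit
  lift d to Fˣ using hd.isUnit
  lift d' to Fˣ using hd'.isUnit
  simp only [← Units.val_mul, charExt_units, ← Units.val_mul, ← map_mul, Prod.mk_mul_mk]

/- The `U`-invariant functions of `Ind χ` supported on the Bruhat cells `B` and `B nₛ U`, equal to
`1` at `1` and at `nₛ` respectively: for `g = b nₛ u` with `b = [[a, c], [0, d]]` one has
`g₁₀ = d` and `det g = a d`. -/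
open scoped Classical in
def smallCellFun (χ : (Fˣ × Fˣ) →* kˣ) (g : GL2 F) : k :=
  if (g : M2) 1 0 = 0 then charExt χ ((g : M2) 0 0) ((g : M2) 1 1) else 0

open scoped Classical in
def bigCellFun (χ : (Fˣ × Fˣ) →* kˣ) (g : GL2 F) : k :=
  if (g : M2) 1 0 = 0 then 0 else charExt χ ((g : M2).det / (g : M2) 1 0) ((g : M2) 1 0)

variable (χ : (Fˣ × Fˣ) →* kˣ)

lemma smallCellFun_of_ne {g : GL2 F} (h : (g : M2) 1 0 ≠ 0) : smallCellFun χ g = 0 := if_neg h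

lemma bigCellFun_of_eq {g : GL2 F} (h : (g : M2) 1 0 = 0) : bigCellFun χ g = 0 := if_pos h

lemma smallCellFun_mem_Ind : smallCellFun χ ∈ Ind F k χ := by
  intro a d c g
  by_cases hg : (g : M2) 1 0 = 0
  · have hdet : (g : M2).det = (g : M2) 0 0 * (g : M2) 1 1 := by simp [Matrix.det_fin_two, hg]
    have h00 : (g : M2) 0 0 ≠ 0 := fun h0 => g.det_ne_zero (by simp [hdet, h0])
    have h11 : (g : M2) 1 1 ≠ 0 := fun h0 => g.det_ne_zero (by simp [hdet, h0])
    simp [smallCellFun, GL2.mul_apply, hg, charExt_mul χ a.ne_zero h00 d.ne_zero h11]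
  · simp [smallCellFun, GL2.mul_apply, hg]

lemma bigCellFun_mem_Ind : bigCellFun χ ∈ Ind F k χ := by
  intro a d c g
  by_cases hg : (g : M2) 1 0 = 0
  · simp [bigCellFun, GL2.mul_apply, hg]
  · have hdet : ((bElt F a d c * g : GL2 F) : M2).det = a * d * (g : M2).det := by
      rw [Matrix.GeneralLinearGroup.coe_mul, Matrix.det_mul]; simp [Matrix.det_fin_two]
    have hdiv : (a : F) * d * (g : M2).det / (d * (g : M2) 1 0) =
        a * ((g : M2).det / (g : M2) 1 0) := by
      field_simp
    simp only [bigCellFun, hdet]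
    simp [GL2.mul_apply, hg, hdiv,
      charExt_mul χ a.ne_zero (div_ne_zero g.det_ne_zero hg) d.ne_zero hg]

@[simp] lemma smallCellFun_one : smallCellFun χ 1 = 1 := by simp [smallCellFun]

@[simp] lemma bigCellFun_one : bigCellFun χ 1 = 0 := bigCellFun_of_eq χ (by simp)

@[simp] lemma smallCellFun_nsElt_mul_uElt (μ : F) : smallCellFun χ (nsElt F * uElt F μ) = 0 :=
  smallCellFun_of_ne χ (by simp [GL2.mul_apply])

@[simp] lemma bigCellFun_nsElt_mul_uElt (μ : F) : bigCellFun χ (nsElt F * uElt F μ) = 1 := by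
  simp [bigCellFun, GL2.mul_apply, Matrix.det_fin_two]

@[simp] lemma smallCellFun_nsElt : smallCellFun χ (nsElt F) = 0 := by
  simpa using smallCellFun_nsElt_mul_uElt χ 0

@[simp] lemma bigCellFun_nsElt : bigCellFun χ (nsElt F) = 1 := by
  simpa using bigCellFun_nsElt_mul_uElt χ 0

lemma smallCellFun_bElt (a d : Fˣ) (c : F) : smallCellFun χ (bElt F a d c) = χ (a, d) := by
  simp [smallCellFun]

lemma rt_uElt_smallCellFun (c : F) : rt F k (uElt F c) (smallCellFun χ) = smallCellFun χ :=
  Ind_ext (rt_mem_Ind _ (smallCellFun_mem_Ind χ)) (smallCellFun_mem_Ind χ)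
    (by simp [smallCellFun]) (by simp [mul_assoc, ← uElt_add])

lemma rt_uElt_bigCellFun (c : F) : rt F k (uElt F c) (bigCellFun χ) = bigCellFun χ :=
  Ind_ext (rt_mem_Ind _ (bigCellFun_mem_Ind χ)) (bigCellFun_mem_Ind χ)
    (by simp [bigCellFun]) (by simp [mul_assoc, ← uElt_add])

lemma rt_hElt_smallCellFun (a d : Fˣ) :
    rt F k (hElt F a d) (smallCellFun χ) = (χ (a, d) : k) • smallCellFun χ :=
  Ind_ext (rt_mem_Ind _ (smallCellFun_mem_Ind χ)) (Submodule.smul_mem _ _ (smallCellFun_mem_Ind χ))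
    (by simp [hElt, smallCellFun_bElt])
    (fun μ => by simpa using smallCellFun_of_ne χ (by simp [hElt, GL2.mul_apply]))

lemma rt_hElt_bigCellFun (a d : Fˣ) :
    rt F k (hElt F a d) (bigCellFun χ) = (χ (d, a) : k) • bigCellFun χ :=
  Ind_ext (rt_mem_Ind _ (bigCellFun_mem_Ind χ)) (Submodule.smul_mem _ _ (bigCellFun_mem_Ind χ))
    (by simp [hElt, bigCellFun])
    (fun μ => by simp [hElt, bigCellFun, GL2.mul_apply, Matrix.det_fin_two])

lemma smallCellFun_inv_uElt_mul_inv_nsElt (μ : F) :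
    smallCellFun χ ((uElt F μ)⁻¹ * (nsElt F)⁻¹) = 0 :=
  smallCellFun_of_ne χ (by simp [GL2.mul_apply, uElt_inv, nsElt_inv])

lemma smallCellFun_nsElt_mul_uElt_mul_inv_of_ne {l μ : F} (h : l ≠ μ) :
    smallCellFun χ (nsElt F * uElt F l * (uElt F μ)⁻¹ * (nsElt F)⁻¹) = 0 :=
  smallCellFun_of_ne χ (by simpa [GL2.mul_apply, uElt_inv, nsElt_inv, neg_add_eq_zero] using h)

lemma eq_smul_smallCellFun_add_smul_bigCellFun {f : GL2 F → k} (hf : f ∈ Ind F k χ)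
    (hU : ∀ c, rt F k (uElt F c) f = f) :
    f = f 1 • smallCellFun χ + f (nsElt F) • bigCellFun χ :=
  Ind_ext hf (Submodule.add_mem _ (Submodule.smul_mem _ _ (smallCellFun_mem_Ind χ))
      (Submodule.smul_mem _ _ (bigCellFun_mem_Ind χ)))
    (by simp) (fun μ => by simpa using congrFun (hU μ) (nsElt F))

lemma Ind_inf_invSubmodule_eq_span :
    Ind F k χ ⊓ invSubmodule k (rt F k) (Set.range (uElt F)) =
      Submodule.span k (Set.range ![smallCellFun χ, bigCellFun χ]) := by
  apply le_antisymm
  · intro f hf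
    obtain ⟨hfInd, hfU⟩ := Submodule.mem_inf.1 hf
    rw [eq_smul_smallCellFun_add_smul_bigCellFun χ hfInd fun c => hfU _ ⟨c, rfl⟩,
      Matrix.range_cons_cons_empty, Submodule.mem_span_pair]
    exact ⟨_, _, rfl⟩
  · rw [Submodule.span_le, Matrix.range_cons_cons_empty, Set.insert_subset_iff,
      Set.singleton_subset_iff]
    refine ⟨⟨smallCellFun_mem_Ind χ, ?_⟩, ⟨bigCellFun_mem_Ind χ, ?_⟩⟩
    · rintro _ ⟨c, rfl⟩; exact rt_uElt_smallCellFun χ c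
    · rintro _ ⟨c, rfl⟩; exact rt_uElt_bigCellFun χ c

lemma finrank_Ind_inf_invSubmodule :
    Module.finrank k ↥(Ind F k χ ⊓ invSubmodule k (rt F k) (Set.range (uElt F))) = 2 := by
  have hli : LinearIndependent k ![smallCellFun χ, bigCellFun χ] := by
    refine LinearIndependent.pair_iff.2 fun s t hst => ⟨?_, ?_⟩
    · simpa using congrFun hst 1
    · simpa using congrFun hst (nsElt F)
  rw [Ind_inf_invSubmodule_eq_span, finrank_span_eq_card hli, Fintype.card_fin]

end Induced

section Hecke
variable {F k} (χ : (Fˣ × Fˣ) →* kˣ)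

lemma Ind_eq_span_range_rt_smallCellFun :
    Ind F k χ = Submodule.span k (Set.range fun g => rt F k g (smallCellFun χ)) := by
  refine le_antisymm (fun f hf => ?_)
    (Submodule.span_le.2 <| Set.range_subset_iff.2 fun g => rt_mem_Ind g (smallCellFun_mem_Ind χ))
  have hsum : f = f 1 • smallCellFun χ +
      ∑ μ : F, f (nsElt F * uElt F μ) • rt F k (nsElt F * uElt F μ)⁻¹ (smallCellFun χ) := by
    refine Ind_ext hf (Submodule.add_mem _ (Submodule.smul_mem _ _ (smallCellFun_mem_Ind χ))
      (Submodule.sum_mem _ fun μ _ =>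
        Submodule.smul_mem _ _ (rt_mem_Ind _ (smallCellFun_mem_Ind χ)))) ?_ ?_
    · simp [smallCellFun_inv_uElt_mul_inv_nsElt]
    · intro l
      rw [Pi.add_apply, Finset.sum_apply, Finset.sum_eq_single l
        (fun μ _ hμ => by simp [smallCellFun_nsElt_mul_uElt_mul_inv_of_ne χ (Ne.symm hμ)])
        (by simp)]
      simp
  rw [hsum]
  refine Submodule.add_mem _ (Submodule.smul_mem _ _ (Submodule.subset_span ⟨1, by simp⟩))
    (Submodule.sum_mem _ fun μ _ => Submodule.smul_mem _ _ (Submodule.subset_span ⟨_, rfl⟩))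

lemma heckeT_apply (f : GL2 F → k) (x : GL2 F) :
    heckeT F k f x = ∑ c : F, f ((nsElt F)⁻¹ * uElt F c * x) := rfl

lemma heckeT_rt (g : GL2 F) (f : GL2 F → k) :
    heckeT F k (rt F k g f) = rt F k g (heckeT F k f) := by
  funext x
  simp [heckeT_apply, mul_assoc]

lemma heckeT_mem_Ind {f : GL2 F → k} (hf : f ∈ Ind F k χ) :
    heckeT F k f ∈ Ind F k (swapChar F k χ) := by
  intro a d c g
  have hbij : Function.Bijective fun l : F => (c + l * d) / a := by
    refine (Finite.injective_iff_bijective).1 fun l l' h => ?_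
    simpa [div_left_inj' a.ne_zero, d.ne_zero] using h
  calc heckeT F k f (bElt F a d c * g)
      = ∑ l : F, (χ (d, a) : k) * f ((nsElt F)⁻¹ * uElt F ((c + l * d) / a) * g) := by
        refine Finset.sum_congr rfl fun l _ => ?_
        rw [← mul_assoc, inv_nsElt_mul_uElt_mul_bElt, mul_assoc (hElt F d a)]
        exact hf d a 0 _
    _ = (swapChar F k χ (a, d) : k) * heckeT F k f g := by
        rw [← Finset.mul_sum]
        exact congrArg _ (Fintype.sum_bijective _ hbij _ _ fun _ => rfl)

lemma heckeT_smallCellFun : heckeT F k (smallCellFun χ) = bigCellFun (swapChar F k χ) := by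
  refine Ind_ext (heckeT_mem_Ind χ (smallCellFun_mem_Ind χ)) (bigCellFun_mem_Ind _) ?_ ?_
  · simp only [heckeT_apply, bigCellFun_one]
    exact Finset.sum_eq_zero fun l _ =>
      smallCellFun_of_ne χ (by simp [GL2.mul_apply, nsElt_inv])
  · intro μ
    rw [heckeT_apply, Finset.sum_eq_single 0
      (fun l _ hl => smallCellFun_of_ne χ (by simpa [GL2.mul_apply, nsElt_inv] using hl))
      (by simp)]
    simp [smallCellFun]

lemma map_heckeT_Ind :
    (Ind F k χ).map (heckeT F k) =
      Submodule.span k (Set.range fun g => rt F k g (bigCellFun (swapChar F k χ))) := by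
  rw [Ind_eq_span_range_rt_smallCellFun, Submodule.map_span, ← Set.range_comp]
  simp only [Function.comp_def, heckeT_rt, heckeT_smallCellFun]

lemma map_heckeT_Ind_ne_bot : (Ind F k χ).map (heckeT F k) ≠ ⊥ := by
  rw [map_heckeT_Ind, Ne, Submodule.span_eq_bot, not_forall]
  exact ⟨_, fun h => one_ne_zero (α := k) (by simpa using congrFun (h ⟨1, rfl⟩) (nsElt F))⟩

end Hecke

section Minimality
variable {F k}

lemma exists_mem_ne_zero_forall_rt_uElt_eq (p : ℕ) [Fact p.Prime] [CharP F p] [CharP k p]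
    {N : Submodule k (GL2 F → k)} (hN : ∀ g, ∀ f ∈ N, rt F k g f ∈ N) (hne : N ≠ ⊥) :
    ∃ f ∈ N, f ≠ 0 ∧ ∀ c, rt F k (uElt F c) f = f := by
  have : CharP (Module.End k (GL2 F → k)) p := charP_of_injective_algebraMap' k p
  have hnil (c : F) : IsNilpotent (rt F k (uElt F c) - 1) := by
    refine isNilpotent_sub_one_of_pow_eq_one p ?_
    rw [← map_pow, ← uElt_nsmul, nsmul_eq_mul, CharP.cast_eq_zero, zero_mul, uElt_zero, map_one]
  have hcomm (c c' : F) : Commute (rt F k (uElt F c)) (rt F k (uElt F c')) := by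
    rw [Commute, SemiconjBy, ← map_mul, ← map_mul, ← uElt_add, ← uElt_add, add_comm]
  obtain ⟨f, hfN, hf, hfix⟩ := Submodule.exists_mem_ne_zero_forall_apply_eq_zero_of_isNilpotent
    hnil (fun c c' => ((hcomm c c').sub_left (.one_left _)).sub_right (.one_right _))
    (fun c f hf => by simpa using N.sub_mem (hN _ f hf) hf) hne
  exact ⟨f, hfN, hf, fun c => by simpa [sub_eq_zero] using hfix c⟩

lemma bigCellFun_mem_of_ne_bot (p : ℕ) [Fact p.Prime] [CharP F p] [CharP k p]
    {ξ : (Fˣ × Fˣ) →* kˣ} (hξ : ξ ≠ swapChar F k ξ)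
    {N : Submodule k (GL2 F → k)} (hNInd : N ≤ Ind F k ξ) (hN : ∀ g, ∀ f ∈ N, rt F k g f ∈ N)
    (hne : N ≠ ⊥) : bigCellFun ξ ∈ N := by
  obtain ⟨f, hfN, hf, hfU⟩ := exists_mem_ne_zero_forall_rt_uElt_eq p hN hne
  obtain ⟨⟨a, d⟩, had⟩ := DFunLike.ne_iff.1 hξ
  have had' : (ξ (a, d) : k) ≠ ξ (d, a) := fun h => had (Units.ext h)
  have hdec := eq_smul_smallCellFun_add_smul_bigCellFun ξ (hNInd hfN) hfU
  have hsmall_eig : rt F k (hElt F a d) (f 1 • smallCellFun ξ) =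
      (ξ (a, d) : k) • f 1 • smallCellFun ξ := by
    rw [map_smul, rt_hElt_smallCellFun, smul_comm]
  have hbig_eig : rt F k (hElt F a d) (f (nsElt F) • bigCellFun ξ) =
      (ξ (d, a) : k) • f (nsElt F) • bigCellFun ξ := by
    rw [map_smul, rt_hElt_bigCellFun, smul_comm]
  have hsmall : f 1 • smallCellFun ξ ∈ N :=
    Submodule.mem_of_add_mem_of_apply_eq_smul (hN _) hsmall_eig hbig_eig had' (hdec ▸ hfN)
  have hbig : f (nsElt F) • bigCellFun ξ ∈ N :=
    Submodule.mem_of_add_mem_of_apply_eq_smul (hN _) hbig_eig hsmall_eig had'.symm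
      (add_comm (f 1 • smallCellFun ξ) _ ▸ hdec ▸ hfN)
  by_cases hns : f (nsElt F) = 0
  · have h1 : f 1 ≠ 0 := fun h1 => hf (by rw [hdec, h1, hns, zero_smul, zero_smul, add_zero])
    have hInd : Ind F k ξ ≤ N := by
      rw [Ind_eq_span_range_rt_smallCellFun, Submodule.span_le]
      rintro _ ⟨g, rfl⟩
      exact hN g _ ((N.smul_mem_iff h1).1 hsmall)
    exact hInd (bigCellFun_mem_Ind ξ)
  · exact (N.smul_mem_iff hns).1 hbig

lemma map_heckeT_Ind_le (p : ℕ) [Fact p.Prime] [CharP F p] [CharP k p]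
    {χ : (Fˣ × Fˣ) →* kˣ} (hχ : χ ≠ swapChar F k χ)
    (N : Submodule k (GL2 F → k)) (hNInd : N ≤ Ind F k (swapChar F k χ))
    (hN : ∀ g, ∀ f ∈ N, rt F k g f ∈ N) (hne : N ≠ ⊥) : (Ind F k χ).map (heckeT F k) ≤ N := by
  have hχ' : swapChar F k χ ≠ swapChar F k (swapChar F k χ) := by
    rwa [swapChar_swapChar, ne_comm]
  rw [map_heckeT_Ind, Submodule.span_le]
  rintro _ ⟨g, rfl⟩
  exact hN g _ (bigCellFun_mem_of_ne_bot p hχ' hNInd hN hne)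

end Minimality

theorem stmt_7 (p n : ℕ) [Fact p.Prime] (hF : Fintype.card F = p ^ n)
    [CharP k p]
    (χ : (Fˣ × Fˣ) →* kˣ) (hχ : χ ≠ swapChar F k χ) :
    Module.finrank k
      ↥(Ind F k (swapChar F k χ) ⊓ invSubmodule k (rt F k) (Set.range (uElt F))) = 2 ∧
    (∀ N : Submodule k (GL2 F → k), N ≤ Ind F k (swapChar F k χ) →
      (∀ (g : GL2 F), ∀ f ∈ N, rt F k g f ∈ N) → N ≠ ⊥ →
      Submodule.map (heckeT F k) (Ind F k χ) ≤ N) ∧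
    Submodule.map (heckeT F k) (Ind F k χ) ≠ ⊥ ∧
    (∀ N₁ N₂ : Submodule k (GL2 F → k),
      N₁ ≤ Ind F k (swapChar F k χ) → N₂ ≤ Ind F k (swapChar F k χ) →
      (∀ (g : GL2 F), ∀ f ∈ N₁, rt F k g f ∈ N₁) →
      (∀ (g : GL2 F), ∀ f ∈ N₂, rt F k g f ∈ N₂) →
      N₁ ⊓ N₂ = ⊥ → N₁ ⊔ N₂ = Ind F k (swapChar F k χ) →
      N₁ = ⊥ ∨ N₂ = ⊥) := by
  have : CharP F p := charP_of_card_eq_prime_pow hF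
  have hmin := map_heckeT_Ind_le p hχ
  refine ⟨finrank_Ind_inf_invSubmodule _, hmin, map_heckeT_Ind_ne_bot χ, ?_⟩
  intro N₁ N₂ h₁ h₂ hN₁ hN₂ hinf _
  by_contra! h
  exact map_heckeT_Ind_ne_bot χ <| eq_bot_iff.2 <|
    hinf ▸ le_inf (hmin N₁ h₁ hN₁ h.1) (hmin N₂ h₂ hN₂ h.2)

end
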